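/- For every integer p ≥ 3 and every real f, the series ∑_{n=0}^∞ ((1/2)_n / n!)^2 · (n + f)(n + f + 1)/((n+1)(n+2)···(n+p)) equals (Γ(p)/Γ(p + 1/2)^2) · (f(f+1) + (f+1)/(2(p−1)) + 9/(16(p−1)(p−2))). -/

import Mathlib

/-!
Write `T q = ∑ₙ ((1/2)ₙ / n!)² / (n + 1)_q` (`gaussSeries q`), which is
`₂F₁(1/2, 1/2; q + 1; 1) / q!`.
As `(n + f)(n + f + 1)` is a quadratic polynomial in `n + p`, the summand of the theorem is a
linear combination of the terms of `T (p - 2)`, `T (p - 1)` and `T p` (the Karlsson–Minton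
reduction), so everything comes down to Gauss's evaluation `T q = Γ(q) / Γ(q + 1/2)²`.

The terms of `T q` and `T (q + 1)` satisfy a telescoping relation, whence
`q T q = (q + 1/2)² T (q + 1)`, so `Γ(q + 1/2)² T q / Γ(q)` does not depend on `q ≥ 1`. It tends
to `1`: by dominated convergence `q! T q → 1`, and log-convexity of `Γ` squeezes
`Γ(q + 1/2)² / (Γ(q) Γ(q + 1))` between `q / (q + 1/2)` and `1`.
-/

open Real BigOperators

noncomputable def poch (a : ℝ) (n : ℕ) : ℝ := ∏ i ∈ Finset.range n, (a + i)

noncomputable def digamma (x : ℝ) : ℝ := deriv Real.Gamma x / Real.Gamma x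

open Filter Topology

lemma poch_zero (a : ℝ) : poch a 0 = 1 := Finset.prod_range_zero _

lemma poch_succ (a : ℝ) (n : ℕ) : poch a (n + 1) = poch a n * (a + n) :=
  Finset.prod_range_succ _ _

lemma poch_succ_left (a : ℝ) (n : ℕ) : poch a (n + 1) = a * poch (a + 1) n := by
  rw [poch, Finset.prod_range_succ', mul_comm]
  congr 1
  · simp
  · exact Finset.prod_congr rfl fun i _ => by push_cast; ring

lemma poch_add_one_mul (a : ℝ) (n : ℕ) : poch (a + 1) n * a = poch a n * (a + n) := by
  rw [← poch_succ, poch_succ_left, mul_comm]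

lemma poch_pos {a : ℝ} (ha : 0 < a) (n : ℕ) : 0 < poch a n :=
  Finset.prod_pos fun i _ => by positivity

lemma poch_le_poch {a b : ℝ} (ha : 0 ≤ a) (hab : a ≤ b) (n : ℕ) : poch a n ≤ poch b n :=
  Finset.prod_le_prod (fun i _ => by positivity) fun i _ => by linarith

lemma poch_one (n : ℕ) : poch 1 n = n.factorial := by
  induction n with
  | zero => simp [poch_zero]
  | succ n ih => rw [poch_succ, ih, Nat.factorial_succ]; push_cast; ring

lemma add_one_mul_poch_one_le {q : ℕ} (hq : 1 ≤ q) (x : ℝ) (hx : 0 ≤ x) :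
    (x + 1) * poch 1 q ≤ poch (x + 1) q := by
  obtain ⟨k, rfl⟩ := Nat.exists_eq_add_of_le' hq
  rw [poch_succ_left, poch_succ_left, one_mul]
  exact mul_le_mul_of_nonneg_left (poch_le_poch (by norm_num) (by linarith) k) (by positivity)

lemma sq_poch_half_div_factorial_le (n : ℕ) :
    (poch (1/2) n / n.factorial) ^ 2 ≤ 1 / ((n : ℝ) + 1) := by
  induction n with
  | zero => simp [poch_zero]
  | succ n ih =>
    have hstep : (1/2 + (n:ℝ)) ^ 2 * ((n:ℝ) + 2) ≤ ((n:ℝ) + 1) ^ 3 := by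
      nlinarith [sq_nonneg (n:ℝ)]
    rw [poch_succ, Nat.factorial_succ]
    push_cast
    calc (poch (1/2) n * (1/2 + n) / ((n + 1) * n.factorial)) ^ 2
        = (poch (1/2) n / n.factorial) ^ 2 * ((1/2 + n) ^ 2 / ((n:ℝ) + 1) ^ 2) := by
          field_simp
      _ ≤ 1 / ((n : ℝ) + 1) * ((n + 1) / (n + 2)) := by
          refine mul_le_mul ih ?_ (by positivity) (by positivity)
          rw [div_le_div_iff₀ (by positivity) (by positivity)]
          nlinarith
      _ = 1 / ((n:ℝ) + 1 + 1) := by field_simp; ring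

noncomputable def gaussSeriesTerm (q n : ℕ) : ℝ :=
  (poch (1/2) n / n.factorial) ^ 2 / poch ((n : ℝ) + 1) q

noncomputable def gaussSeries (q : ℕ) : ℝ := ∑' n, gaussSeriesTerm q n

lemma gaussSeriesTerm_nonneg (q n : ℕ) : 0 ≤ gaussSeriesTerm q n := by
  unfold gaussSeriesTerm
  have := poch_pos (a := (n : ℝ) + 1) (by positivity) q
  positivity

lemma poch_one_mul_gaussSeriesTerm_le {q : ℕ} (hq : 1 ≤ q) (n : ℕ) :
    poch 1 q * gaussSeriesTerm q n ≤ 1 / ((n : ℝ) + 1) ^ 2 := by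
  have hpos := poch_pos one_pos q
  have hP := add_one_mul_poch_one_le hq (n : ℝ) n.cast_nonneg
  calc poch 1 q * gaussSeriesTerm q n
      ≤ poch 1 q * (1 / ((n : ℝ) + 1) / ((n + 1) * poch 1 q)) := by
        unfold gaussSeriesTerm
        gcongr
        exact sq_poch_half_div_factorial_le n
    _ = 1 / ((n : ℝ) + 1) ^ 2 := by field_simp

lemma gaussSeriesTerm_le {q : ℕ} (hq : 1 ≤ q) (n : ℕ) :
    gaussSeriesTerm q n ≤ 1 / ((n : ℝ) + 1) ^ 2 := by
  refine (le_mul_of_one_le_left (gaussSeriesTerm_nonneg q n) ?_).trans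
    (poch_one_mul_gaussSeriesTerm_le hq n)
  rw [poch_one]
  exact_mod_cast q.factorial_pos

lemma summable_one_div_succ_sq : Summable fun n : ℕ => 1 / ((n : ℝ) + 1) ^ 2 := by
  simpa using (summable_nat_add_iff 1).mpr (Real.summable_one_div_nat_pow.mpr one_lt_two)

lemma summable_gaussSeriesTerm {q : ℕ} (hq : 1 ≤ q) : Summable (gaussSeriesTerm q) :=
  .of_nonneg_of_le (gaussSeriesTerm_nonneg q) (gaussSeriesTerm_le hq) summable_one_div_succ_sq

lemma tendsto_natCast_mul_gaussSeriesTerm {q : ℕ} (hq : 1 ≤ q) :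
    Tendsto (fun n : ℕ => n * gaussSeriesTerm q n) atTop (𝓝 0) := by
  refine squeeze_zero (fun n => mul_nonneg n.cast_nonneg (gaussSeriesTerm_nonneg q n))
    (fun n => ?_) tendsto_one_div_add_atTop_nhds_zero_nat
  calc (n : ℝ) * gaussSeriesTerm q n ≤ (n + 1) * (1 / ((n : ℝ) + 1) ^ 2) :=
        mul_le_mul (by linarith) (gaussSeriesTerm_le hq n) (gaussSeriesTerm_nonneg q n)
          (by positivity)
    _ = 1 / ((n : ℝ) + 1) := by field_simp

lemma gaussSeriesTerm_telescoping (q n : ℕ) :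
    q * gaussSeriesTerm q n - (q + 1/2) ^ 2 * gaussSeriesTerm (q + 1) n
      = n * gaussSeriesTerm q n - (n + 1 : ℕ) * gaussSeriesTerm q (n + 1) := by
  have hP := poch_pos (a := (n : ℝ) + 1) (by positivity) q
  have hshift := poch_add_one_mul ((n : ℝ) + 1) q
  unfold gaussSeriesTerm
  rw [poch_succ, poch_succ, Nat.factorial_succ]
  push_cast at hshift ⊢
  have hP' : poch ((n : ℝ) + 1 + 1) q = poch ((n : ℝ) + 1) q * (n + 1 + q) / (n + 1) := by
    field_simp; linarith
  rw [hP']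
  field_simp
  ring

lemma HasSum.eq_of_telescoping {G : Type*} [AddCommGroup G] [TopologicalSpace G]
    [IsTopologicalAddGroup G] [T2Space G] {v : ℕ → G} {s : G}
    (h : HasSum (fun n => v n - v (n + 1)) s) (hv : Tendsto v atTop (𝓝 0)) : s = v 0 := by
  refine tendsto_nhds_unique h.tendsto_sum_nat ?_
  simp only [Finset.sum_range_sub']
  simpa using tendsto_const_nhds.sub hv

lemma gaussSeries_recurrence {q : ℕ} (hq : 1 ≤ q) :
    q * gaussSeries q = (q + 1/2) ^ 2 * gaussSeries (q + 1) := by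
  have h := ((summable_gaussSeriesTerm hq).hasSum.mul_left (q : ℝ)).sub
    ((summable_gaussSeriesTerm (q := q + 1) (by omega)).hasSum.mul_left (((q : ℝ) + 1/2) ^ 2))
  simp_rw [gaussSeriesTerm_telescoping] at h
  have := h.eq_of_telescoping (v := fun n : ℕ => n * gaussSeriesTerm q n)
    (tendsto_natCast_mul_gaussSeriesTerm hq)
  simp only [CharP.cast_eq_zero, zero_mul] at this
  exact sub_eq_zero.mp this

lemma sq_Gamma_add_half_le {s : ℝ} (hs : 0 < s) :
    Gamma (s + 1/2) ^ 2 ≤ Gamma s * Gamma (s + 1) := by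
  have h := Gamma_mul_add_mul_le_rpow_Gamma_mul_rpow_Gamma hs (by linarith : 0 < s + 1)
    (a := 1/2) (b := 1/2) (by norm_num) (by norm_num) (by norm_num)
  rw [show 1/2 * s + 1/2 * (s + 1) = s + 1/2 by ring, ← sqrt_eq_rpow, ← sqrt_eq_rpow,
    ← sqrt_mul (Gamma_pos_of_pos hs).le] at h
  calc Gamma (s + 1/2) ^ 2 ≤ √(Gamma s * Gamma (s + 1)) ^ 2 :=
        pow_le_pow_left₀ (Gamma_pos_of_pos (by positivity)).le h 2
    _ = Gamma s * Gamma (s + 1) :=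
        sq_sqrt (mul_pos (Gamma_pos_of_pos hs) (Gamma_pos_of_pos (by positivity))).le

lemma mul_Gamma_mul_Gamma_add_one_le {s : ℝ} (hs : 0 < s) :
    s * (Gamma s * Gamma (s + 1)) ≤ (s + 1/2) * Gamma (s + 1/2) ^ 2 := by
  have h := sq_Gamma_add_half_le (s := s + 1/2) (by positivity)
  rw [show s + 1/2 + 1/2 = s + 1 by ring, Gamma_add_one (s := s + 1/2) (by positivity)] at h
  calc s * (Gamma s * Gamma (s + 1)) = Gamma (s + 1) ^ 2 := by rw [Gamma_add_one hs.ne']; ring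
    _ ≤ (s + 1/2) * Gamma (s + 1/2) ^ 2 := by linarith

lemma tendsto_sq_Gamma_add_half_div :
    Tendsto (fun m : ℕ => Gamma (m + 1/2) ^ 2 / (Gamma m * Gamma (m + 1))) atTop (𝓝 1) := by
  have hpos {m : ℕ} (hm : 0 < m) : 0 < Gamma m * Gamma (m + 1) :=
    mul_pos (Gamma_pos_of_pos (by positivity)) (Gamma_pos_of_pos (by positivity))
  refine tendsto_of_tendsto_of_tendsto_of_le_of_le' (tendsto_natCast_div_add_atTop (1/2 : ℝ))
    tendsto_const_nhds ?_ ?_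
  · filter_upwards [eventually_gt_atTop 0] with m hm
    rw [div_le_div_iff₀ (by positivity) (hpos hm)]
    linarith [mul_Gamma_mul_Gamma_add_one_le (s := m) (by positivity)]
  · filter_upwards [eventually_gt_atTop 0] with m hm
    exact div_le_one_of_le₀ (sq_Gamma_add_half_le (by positivity)) (hpos hm).le

lemma tendsto_poch_one_mul_gaussSeriesTerm (n : ℕ) :
    Tendsto (fun q => poch 1 q * gaussSeriesTerm q n) atTop (𝓝 (if n = 0 then 1 else 0)) := by
  rcases n with _ | n
  · refine tendsto_const_nhds.congr fun q => ?_
    have := poch_pos one_pos q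
    simp [gaussSeriesTerm, poch_zero, this.ne']
  · refine squeeze_zero (fun q => mul_nonneg (poch_pos one_pos q).le (gaussSeriesTerm_nonneg q _))
      (fun q => ?_) tendsto_one_div_add_atTop_nhds_zero_nat
    have hpos := poch_pos one_pos q
    have h2 : poch 2 q = poch 1 q * (q + 1) := by
      have := poch_add_one_mul 1 q
      norm_num at this
      linarith
    have hw : (poch (1/2) (n + 1) / (n + 1).factorial) ^ 2 ≤ 1 :=
      (sq_poch_half_div_factorial_le _).trans
        (div_le_one_of_le₀ (by push_cast; linarith) (by positivity))
    calc poch 1 q * gaussSeriesTerm q (n + 1) ≤ poch 1 q * (1 / poch 2 q) := by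
          unfold gaussSeriesTerm
          gcongr
          · exact poch_pos (by norm_num) q
          · exact poch_le_poch (by norm_num) (by push_cast; linarith) q
      _ = 1 / ((q : ℝ) + 1) := by rw [h2]; field_simp

lemma tendsto_poch_one_mul_gaussSeries :
    Tendsto (fun q => poch 1 q * gaussSeries q) atTop (𝓝 1) := by
  have h := tendsto_tsum_of_dominated_convergence summable_one_div_succ_sq
    tendsto_poch_one_mul_gaussSeriesTerm ?_
  · simpa [gaussSeries, tsum_mul_left] using h
  filter_upwards [eventually_ge_atTop 1] with q hq n
  rw [Real.norm_of_nonneg (mul_nonneg (poch_pos one_pos q).le (gaussSeriesTerm_nonneg q n))]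
  exact poch_one_mul_gaussSeriesTerm_le hq n

lemma gaussSeries_eq {q : ℕ} (hq : 1 ≤ q) : gaussSeries q = Gamma q / Gamma (q + 1/2) ^ 2 := by
  let A : ℕ → ℝ := fun m => Gamma (m + 1/2) ^ 2 / Gamma m * gaussSeries m
  have hstep : ∀ m ≥ 1, A (m + 1) = A m := fun m hm => by
    have hm' : (0 : ℝ) < m := by exact_mod_cast hm
    have hrec := gaussSeries_recurrence hm
    simp only [A]
    push_cast
    rw [Gamma_add_one hm'.ne', show (m : ℝ) + 1 + 1/2 = m + 1/2 + 1 by ring,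
      Gamma_add_one (by positivity)]
    have := Gamma_pos_of_pos hm'
    field_simp
    linear_combination -4 * hrec
  have hconst : ∀ m ≥ q, A m = A q :=
    Nat.le_induction rfl fun m hqm ih => (hstep m (hq.trans hqm)).trans ih
  have hlim : Tendsto A atTop (𝓝 1) := by
    have := tendsto_sq_Gamma_add_half_div.mul tendsto_poch_one_mul_gaussSeries
    rw [one_mul] at this
    refine this.congr' ?_
    filter_upwards [eventually_gt_atTop 0] with m hm
    have := Gamma_pos_of_pos (by positivity : (0 : ℝ) < m + 1)
    simp only [A]
    rw [poch_one, ← Gamma_nat_eq_factorial]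
    field_simp
  have hAq : A q = 1 :=
    tendsto_nhds_unique (tendsto_const_nhds.congr' (eventually_ge_atTop q |>.mono
      fun m hm => (hconst m hm).symm)) hlim
  have := Gamma_pos_of_pos (by positivity : (0 : ℝ) < q + 1/2)
  simp only [A] at hAq
  field_simp at hAq ⊢
  linarith

lemma quadratic_mul_gaussSeriesTerm (q n : ℕ) (f : ℝ) :
    (n + f) * (n + f + 1) * gaussSeriesTerm (q + 2) n
      = gaussSeriesTerm q n + 2 * (f - q - 1) * gaussSeriesTerm (q + 1) n
        + (f - q - 2) * (f - q - 1) * gaussSeriesTerm (q + 2) n := by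
  have := poch_pos (a := (n : ℝ) + 1) (by positivity) q
  unfold gaussSeriesTerm
  rw [poch_succ, poch_succ]
  push_cast
  field_simp
  ring

lemma hasSum_quadratic_mul_gaussSeriesTerm {q : ℕ} (hq : 1 ≤ q) (f : ℝ) :
    HasSum (fun n : ℕ => (n + f) * (n + f + 1) * gaussSeriesTerm (q + 2) n)
      (gaussSeries q + 2 * (f - q - 1) * gaussSeries (q + 1)
        + (f - q - 2) * (f - q - 1) * gaussSeries (q + 2)) := by
  have hs {k : ℕ} (hk : 1 ≤ k) : HasSum (gaussSeriesTerm k) (gaussSeries k) :=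
    (summable_gaussSeriesTerm hk).hasSum
  simp_rw [quadratic_mul_gaussSeriesTerm]
  exact ((hs hq).add ((hs (by omega)).mul_left _)).add ((hs (by omega)).mul_left _)

theorem stmt12 (p : ℕ) (hp : 3 ≤ p) (f : ℝ) :
    ∑' n : ℕ, (poch (1/2) n / n.factorial) ^ 2 *
        (((n : ℝ) + f) * ((n : ℝ) + f + 1) / poch ((n : ℝ) + 1) p) =
      Real.Gamma p / Real.Gamma (p + 1/2) ^ 2 *
        (f * (f + 1) + (f + 1) / (2 * ((p : ℝ) - 1)) +
          9 / (16 * ((p : ℝ) - 1) * ((p : ℝ) - 2))) := by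
  rw [← gaussSeries_eq (by omega)]
  obtain ⟨q, rfl⟩ : ∃ q, p = q + 2 := ⟨p - 2, by omega⟩
  have hq : 1 ≤ q := by omega
  have hsummand (n : ℕ) : (poch (1/2) n / n.factorial) ^ 2 *
      (((n : ℝ) + f) * ((n : ℝ) + f + 1) / poch ((n : ℝ) + 1) (q + 2))
        = (n + f) * (n + f + 1) * gaussSeriesTerm (q + 2) n := by
    rw [gaussSeriesTerm]; ring
  rw [tsum_congr hsummand, (hasSum_quadratic_mul_gaussSeriesTerm hq f).tsum_eq]
  have h0 := gaussSeries_recurrence hq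
  have h1 : (q + 1 : ℝ) * gaussSeries (q + 1) = (q + 3/2) ^ 2 * gaussSeries (q + 2) := by
    have := gaussSeries_recurrence (q := q + 1) (by omega)
    push_cast at this
    linear_combination this
  push_cast
  rw [show (q : ℝ) + 2 - 1 = q + 1 by ring, show (q : ℝ) + 2 - 2 = q by ring]
  have : (q : ℝ) ≠ 0 := by positivity
  field_simp
  linear_combination 32 * (q + 1) * h0 + (32 * (q + 1/2) ^ 2 + 64 * q * (f - q - 1)) * h1
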